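/- arXiv:2504.10142 — 2 statements merged into one kernel-verified Lean document; each statement's English description precedes it below -/
import Mathlib

section
/- Let Λ > 0, γ ∈ (0,4), a = √(Λ(1-γ/4)), h(t) = -√(Λ/(1-γ/4)) tan(at), and β ∈ ℝ. Define a(t) = β (cos(at))^{-(1-γ/2)/(1-γ/4)} and d(t) = (1/2)(1-γ/2) h(t). If the inequality (1/2)(1-γ/2) h'(t) + 2 a(t)² ≤ 0 holds at t = 0, then (1/2)(1-γ/2)Λ ≥ 2β². Conversely, if (1/2)(1-γ/2)Λ ≥ 2β² and 0 < γ ≤ 2, then (1/2)(1-γ/2) h'(t) + 2a(t)² ≤ 0 for all t in the interval of definition. -/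
/-!
Since `√(Λ/(1-γ/4)) · a = Λ`, the chain rule gives `h'(t) = -Λ / cos²(at)`; at `t = 0` the
inequality reads `-(1/2)(1-γ/2)Λ + 2β² ≤ 0`. Conversely, for `γ ≥ 0` the exponent
`-2(1-γ/2)/(1-γ/4)` is at least `-2`, so `0 < cos(at) ≤ 1` gives `A(t)² ≤ β² / cos²(at)` and the
left-hand side is at most `(2β² - (1/2)(1-γ/2)Λ) / cos²(at) ≤ 0`.
-/

open Real Set

lemma sqrt_div_mul_sqrt_mul {x y : ℝ} (hx : 0 ≤ x) (hy : 0 < y) :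
    √(x / y) * √(x * y) = x := by
  rw [← sqrt_mul (div_nonneg hx hy.le), show x / y * (x * y) = x ^ 2 by field_simp,
    sqrt_sq hx]

lemma hasDerivAt_const_mul_tan_mul (c a t : ℝ) (ht : cos (a * t) ≠ 0) :
    HasDerivAt (fun t => c * tan (a * t)) (c * a / cos (a * t) ^ 2) t := by
  have hlin : HasDerivAt (fun t => a * t) a t := by
    simpa using (hasDerivAt_id t).const_mul a
  exact (((hasDerivAt_tan ht).comp t hlin).const_mul c).congr_deriv (by ring)

lemma cos_mul_pos_of_mem_Ioo {a t : ℝ} (ha : 0 < a)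
    (ht : t ∈ Ioo (-(π / (2 * a))) (π / (2 * a))) : 0 < cos (a * t) := by
  obtain ⟨hlo, hhi⟩ := ht
  rw [← neg_div, div_lt_iff₀ (by positivity)] at hlo
  rw [lt_div_iff₀ (by positivity)] at hhi
  exact cos_pos_of_mem_Ioo ⟨by linarith, by linarith⟩

lemma sq_rpow_neg_le_inv_sq {c q : ℝ} (hc0 : 0 < c) (hc1 : c ≤ 1) (hq : q ≤ 1) :
    (c ^ (-q)) ^ 2 ≤ (c ^ 2)⁻¹ := by
  rw [← rpow_mul_natCast hc0.le, ← rpow_two, ← rpow_neg hc0.le]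
  exact rpow_le_rpow_of_exponent_ge hc0 hc1 (by push_cast; linarith)

theorem stmt10_general (Λ γ β : ℝ) (hΛ : 0 < Λ) (hγ0 : 0 < γ) (hγ4 : γ < 4)
    (a : ℝ) (ha : a = Real.sqrt (Λ * (1 - γ / 4)))
    (h A : ℝ → ℝ)
    (hh : h = fun t => -Real.sqrt (Λ / (1 - γ / 4)) * Real.tan (a * t))
    (hA : A = fun t => β * Real.cos (a * t) ^ (-((1 - γ / 2) / (1 - γ / 4)))) :
    ((1 / 2) * (1 - γ / 2) * deriv h 0 + 2 * (A 0) ^ 2 ≤ 0 →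
      (1 / 2) * (1 - γ / 2) * Λ ≥ 2 * β ^ 2) ∧
    ((1 / 2) * (1 - γ / 2) * Λ ≥ 2 * β ^ 2 → γ ≤ 2 →
      ∀ t ∈ Set.Ioo (-(Real.pi / (2 * a))) (Real.pi / (2 * a)),
        (1 / 2) * (1 - γ / 2) * deriv h t + 2 * (A t) ^ 2 ≤ 0) := by
  have hm : 0 < 1 - γ / 4 := by linarith
  have ha0 : 0 < a := ha ▸ sqrt_pos.2 (by positivity)
  have hderiv (t : ℝ) (ht : cos (a * t) ≠ 0) : deriv h t = -Λ / cos (a * t) ^ 2 := by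
    rw [hh, (hasDerivAt_const_mul_tan_mul _ a t ht).deriv, neg_mul, ha,
      sqrt_div_mul_sqrt_mul hΛ.le hm]
  refine ⟨fun H => ?_, fun hK _ t ht => ?_⟩
  · have hh0 : deriv h 0 = -Λ := by simpa using hderiv 0 (by simp)
    have hA0 : A 0 = β := by simp [hA]
    rw [hh0, hA0] at H
    linarith
  · have hc := cos_mul_pos_of_mem_Ioo ha0 ht
    have hq : (1 - γ / 2) / (1 - γ / 4) ≤ 1 := (div_le_one hm).2 (by linarith)
    have hAt : A t ^ 2 ≤ β ^ 2 * (cos (a * t) ^ 2)⁻¹ := by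
      rw [hA, mul_pow]
      exact mul_le_mul_of_nonneg_left (sq_rpow_neg_le_inv_sq hc (cos_le_one _) hq) (sq_nonneg β)
    have hscaled := mul_le_mul_of_nonneg_right hK (inv_pos.2 (pow_pos hc 2)).le
    rw [hderiv t hc.ne', neg_div, div_eq_mul_inv Λ]
    linarith

/-- Constraint on the initial logarithmic derivative `β` in the doubly warped
rigidity model: with `a = √(Λ(1-γ/4))`, `h(t) = -√(Λ/(1-γ/4)) tan(at)`,
`A(t) = β (cos at)^{-(1-γ/2)/(1-γ/4)}` and `d(t) = (1/2)(1-γ/2) h(t)`: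
the inequality `(1/2)(1-γ/2) h' + 2A² ≤ 0` at `t = 0` forces
`(1/2)(1-γ/2)Λ ≥ 2β²`; conversely if `(1/2)(1-γ/2)Λ ≥ 2β²` and `γ ≤ 2` then
the inequality holds on the whole interval. -/
theorem stmt10 (Λ γ β : ℝ) (hΛ : 0 < Λ) (hγ0 : 0 < γ) (hγ4 : γ < 4)
    (a : ℝ) (ha : a = Real.sqrt (Λ * (1 - γ / 4)))
    (h A d : ℝ → ℝ)
    (hh : h = fun t => -Real.sqrt (Λ / (1 - γ / 4)) * Real.tan (a * t))
    (hA : A = fun t => β * Real.cos (a * t) ^ (-((1 - γ / 2) / (1 - γ / 4))))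
    (hd : d = fun t => (1 / 2) * (1 - γ / 2) * h t) :
    ((1 / 2) * (1 - γ / 2) * deriv h 0 + 2 * (A 0) ^ 2 ≤ 0 →
      (1 / 2) * (1 - γ / 2) * Λ ≥ 2 * β ^ 2) ∧
    ((1 / 2) * (1 - γ / 2) * Λ ≥ 2 * β ^ 2 → γ ≤ 2 →
      ∀ t ∈ Set.Ioo (-(Real.pi / (2 * a))) (Real.pi / (2 * a)),
        (1 / 2) * (1 - γ / 2) * deriv h t + 2 * (A t) ^ 2 ≤ 0) :=
  stmt10_general Λ γ β hΛ hγ0 hγ4 a ha h A hh hA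
end

section
/- Fix 0 ≤ c ≤ 1. For the metric g = dt² + (sin t)^{1+c}(cos t)^{1-c} ds₁² + (sin t)^{1-c}(cos t)^{1+c} ds₂² on (0, π/2) × S¹ × S¹, the mean curvature of the slice {t} × T² with respect to ∂_t equals 2 cot(2t), and the Ricci curvatures tangent to the slice satisfy Ric(e₁,e₁) = Ric(e₂,e₂) = 2. -/
/-!
Both warping functions have the form `w = sin^p cos^q`, whose logarithmic derivative is
`L = p cot - q tan`, with `L' = -p (1 + cot²) - q (1 + tan²)` and `w''/w = L² + L'`.
The exponents are `(a, b)` for `φ` and `(b, a)` for `ϕ` with `a + b = 1`, so the mean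
curvature is `L_φ + L_ϕ = cot - tan = 2 cot 2t`, and each Ricci curvature reduces to a
polynomial identity in `cot` and `tan` modulo `cot · tan = 1`.
-/

open Real Set Filter Topology

noncomputable section

def warp (p q t : ℝ) : ℝ := sin t ^ p * cos t ^ q

section warp

variable (p q : ℝ) {t : ℝ}

def warpLogDeriv (t : ℝ) : ℝ := p * (cos t / sin t) - q * (sin t / cos t)

lemma sin_pos_and_cos_pos (ht : t ∈ Ioo 0 (π / 2)) : 0 < sin t ∧ 0 < cos t :=
  ⟨sin_pos_of_mem_Ioo ⟨ht.1, by linarith [ht.2, pi_pos]⟩,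
    cos_pos_of_mem_Ioo ⟨by linarith [ht.1, pi_pos], ht.2⟩⟩

lemma warp_pos (ht : t ∈ Ioo 0 (π / 2)) : 0 < warp p q t :=
  mul_pos (rpow_pos_of_pos (sin_pos_and_cos_pos ht).1 p)
    (rpow_pos_of_pos (sin_pos_and_cos_pos ht).2 q)

lemma hasDerivAt_warp (ht : t ∈ Ioo 0 (π / 2)) :
    HasDerivAt (warp p q) (warp p q t * warpLogDeriv p q t) t := by
  obtain ⟨hs, hc⟩ := sin_pos_and_cos_pos ht
  refine (((hasDerivAt_sin t).rpow_const (Or.inl hs.ne')).mul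
    ((hasDerivAt_cos t).rpow_const (Or.inl hc.ne'))).congr_deriv ?_
  rw [warp, warpLogDeriv, rpow_sub_one hs.ne', rpow_sub_one hc.ne']
  field_simp
  ring

lemma hasDerivAt_warpLogDeriv (ht : t ∈ Ioo 0 (π / 2)) :
    HasDerivAt (warpLogDeriv p q)
      (-p * (1 + (cos t / sin t) ^ 2) - q * (1 + (sin t / cos t) ^ 2)) t := by
  obtain ⟨hs, hc⟩ := sin_pos_and_cos_pos ht
  refine ((((hasDerivAt_cos t).div (hasDerivAt_sin t) hs.ne').const_mul p).sub
    (((hasDerivAt_sin t).div (hasDerivAt_cos t) hc.ne').const_mul q)).congr_deriv ?_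
  field_simp
  ring

lemma deriv_warp_div_warp (ht : t ∈ Ioo 0 (π / 2)) :
    deriv (warp p q) t / warp p q t = warpLogDeriv p q t := by
  rw [(hasDerivAt_warp p q ht).deriv, mul_div_cancel_left₀ _ (warp_pos p q ht).ne']

lemma deriv_deriv_warp_div_warp (ht : t ∈ Ioo 0 (π / 2)) :
    deriv (deriv (warp p q)) t / warp p q t = warpLogDeriv p q t ^ 2
      - p * (1 + (cos t / sin t) ^ 2) - q * (1 + (sin t / cos t) ^ 2) := by
  have hderiv : deriv (warp p q) =ᶠ[𝓝 t] warp p q * warpLogDeriv p q :=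
    eventually_of_mem (isOpen_Ioo.mem_nhds ht) fun _ hu => (hasDerivAt_warp p q hu).deriv
  rw [hderiv.deriv_eq, ((hasDerivAt_warp p q ht).mul (hasDerivAt_warpLogDeriv p q ht)).deriv]
  field_simp [(warp_pos p q ht).ne']
  ring

end warp

end

theorem stmt13_general (c : ℝ)
    (φ ϕ : ℝ → ℝ)
    (hφ : φ = fun t => Real.sin t ^ ((1 + c) / 2) * Real.cos t ^ ((1 - c) / 2))
    (hϕ : ϕ = fun t => Real.sin t ^ ((1 - c) / 2) * Real.cos t ^ ((1 + c) / 2)) :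
    ∀ t ∈ Set.Ioo (0 : ℝ) (Real.pi / 2),
      deriv φ t / φ t + deriv ϕ t / ϕ t = 2 * (Real.cos (2 * t) / Real.sin (2 * t)) ∧
      -(deriv (deriv φ) t / φ t + deriv φ t * deriv ϕ t / (φ t * ϕ t)) = 2 ∧
      -(deriv (deriv ϕ) t / ϕ t + deriv φ t * deriv ϕ t / (φ t * ϕ t)) = 2 := by
  intro t ht
  obtain ⟨hs, hc⟩ := sin_pos_and_cos_pos ht
  change φ = warp ((1 + c) / 2) ((1 - c) / 2) at hφ
  change ϕ = warp ((1 - c) / 2) ((1 + c) / 2) at hϕ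
  subst hφ hϕ
  simp only [mul_div_mul_comm (deriv _ t), deriv_warp_div_warp _ _ ht,
    deriv_deriv_warp_div_warp _ _ ht, warpLogDeriv]
  have hcot_tan : cos t / sin t * (sin t / cos t) = 1 := by field_simp
  have hcot_two_mul : 2 * (cos (2 * t) / sin (2 * t)) = cos t / sin t - sin t / cos t := by
    rw [cos_two_mul', sin_two_mul]
    field_simp
  refine ⟨by rw [hcot_two_mul]; ring, ?_, ?_⟩ <;> linear_combination hcot_tan

/-- The doubly warped metric `dt² + (sin t)^{1+c}(cos t)^{1-c} ds₁²
+ (sin t)^{1-c}(cos t)^{1+c} ds₂²` on `(0,π/2) × T²`, with warping functions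
`φ(t) = (sin t)^{(1+c)/2}(cos t)^{(1-c)/2}`, `ϕ(t) = (sin t)^{(1-c)/2}(cos t)^{(1+c)/2}`:
the mean curvature of the slice is `2 cot(2t)` and the slice-tangent Ricci
curvatures equal `2`. -/
theorem stmt13 (c : ℝ) (hc0 : 0 ≤ c) (hc1 : c ≤ 1)
    (φ ϕ : ℝ → ℝ)
    (hφ : φ = fun t => Real.sin t ^ ((1 + c) / 2) * Real.cos t ^ ((1 - c) / 2))
    (hϕ : ϕ = fun t => Real.sin t ^ ((1 - c) / 2) * Real.cos t ^ ((1 + c) / 2)) :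
    ∀ t ∈ Set.Ioo (0 : ℝ) (Real.pi / 2),
      deriv φ t / φ t + deriv ϕ t / ϕ t = 2 * (Real.cos (2 * t) / Real.sin (2 * t)) ∧
      -(deriv (deriv φ) t / φ t + deriv φ t * deriv ϕ t / (φ t * ϕ t)) = 2 ∧
      -(deriv (deriv ϕ) t / ϕ t + deriv φ t * deriv ϕ t / (φ t * ϕ t)) = 2 :=
  stmt13_general c φ ϕ hφ hϕ
end
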